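/- In the odd polynomial algebra OPol_{n+1}, for any m ≥ 0 one has x_{n+1}^{m+n+1} = -Σ_{q=0}^{n} (Σ_{r=0}^{m} (-1)^{m+n+1-q-r} h_r^{(n+1)} e_{m+n+1-q-r}^{(n+1)}) x_{n+1}^{q}, where e_s^{(n+1)} and h_s^{(n+1)} denote the odd elementary and complete symmetric polynomials in x_1,…,x_{n+1}. -/

import Mathlib

open scoped Classical

noncomputable section

/-- The odd elementary symmetric polynomial
`e_r = ∑_{i_1 < ⋯ < i_r} x_{i_1} ⋯ x_{i_r}`. -/
def oddElem {A : Type*} [Ring A] {N : ℕ} (x : Fin N → A) (r : ℕ) : A :=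
  ∑ s ∈ Finset.powersetCard r (Finset.univ : Finset (Fin N)),
    ((s.sort (· ≤ ·)).map x).prod

/-- The odd complete symmetric polynomial
`h_r = ∑_{i_r ≥ ⋯ ≥ i_1} x_{i_r} ⋯ x_{i_1}`, the weakly increasing sequences
`i_1 ≤ ⋯ ≤ i_r` being encoded as monotone functions `Fin r → Fin N`. -/
def oddComplete {A : Type*} [Ring A] {N : ℕ} (x : Fin N → A) (r : ℕ) : A :=
  ∑ f ∈ Finset.univ.filter (fun f : Fin r → Fin N => Monotone f),
    ((List.ofFn fun i => x (f i)).reverse).prod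

/-!
In `A⟦t⟧` (with `t` central) put `E(t) = ∑ (-1)^r e_r t^r` and `H(t) = ∑ h_r t^r`.
Splitting off the last variable `X = x_{n+1}` gives `E = E' (1 - X t)` and `(1 - X t) H = H'`,
so `E H = 1` by induction on the number of variables, and then `H E = 1` since `E` is a unit.
Moreover `E · ∑ X^k t^k = E'` has degree `≤ n` (an odd Cayley–Hamilton theorem). The identity
holds for the coefficients of any `G` with `H E = 1` and `deg (E G) ≤ n`: split `H` at degree `m`
and compare the coefficients of `t^(m+n+1)` in `G = H (E G)`, using `H E = 1` in degrees
`m+1, …, m+n+1`.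
-/

open Finset PowerSeries

section

variable {A : Type*} [Ring A]

lemma Finset.sort_map_castSuccEmb {n : ℕ} (s : Finset (Fin n)) :
    (s.map Fin.castSuccEmb).sort (· ≤ ·) = (s.sort (· ≤ ·)).map Fin.castSucc :=
  (Fin.strictMono_castSucc.strictMonoOn _).map_finsetSort.symm

lemma Finset.sort_cons_last {n : ℕ} (s : Finset (Fin (n + 1))) (h : Fin.last n ∉ s) :
    (s.cons (Fin.last n) h).sort (· ≤ ·) = s.sort (· ≤ ·) ++ [Fin.last n] := by
  have hl : (s.sort (· ≤ ·) ++ [Fin.last n]).toFinset = s.cons (Fin.last n) h := by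
    ext; simp
  rw [← hl, List.toFinset_sort]
  · simp [List.pairwise_append, Fin.le_last]
  · simpa [List.nodup_append] using h

lemma PowerSeries.coeff_coe_trunc_mul (H Φ : A⟦X⟧) {m k : ℕ} (hk : m ≤ k) :
    coeff k ((trunc (m + 1) H : A⟦X⟧) * Φ) =
      ∑ r ∈ range (m + 1), coeff r H * coeff (k - r) Φ := by
  rw [coeff_mul, Nat.sum_antidiagonal_eq_sum_range_succ (fun i j => coeff i _ * coeff j Φ)]
  refine (sum_subset_zero_on_sdiff (range_subset_range.2 (by omega)) ?_ ?_).symm <;>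
    intro r hr <;> simp_all [Polynomial.coeff_coe, coeff_trunc]

theorem PowerSeries.coeff_eq_neg_sum_of_mul_eq_one {H E G : A⟦X⟧} (hHE : H * E = 1) {n : ℕ}
    (hEG : ∀ j, n < j → coeff j (E * G) = 0) (m : ℕ) :
    coeff (m + n + 1) G =
      -∑ q ∈ range (n + 1),
        (∑ r ∈ range (m + 1), coeff r H * coeff (m + n + 1 - q - r) E) * coeff q G := by
  set U := PowerSeries.mk fun i => coeff (i + (m + 1)) H
  set L : A⟦X⟧ := (trunc (m + 1) H : A⟦X⟧)
  have hH : H = X ^ (m + 1) * U + L := eq_X_pow_mul_shift_add_trunc (m + 1) H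
  have hUE : ∀ q ∈ range (n + 1), coeff (n - q) (U * E) =
      -∑ r ∈ range (m + 1), coeff r H * coeff (m + n + 1 - q - r) E := by
    intro q hq
    rw [mem_range] at hq
    have h := congrArg (coeff (m + n + 1 - q)) hHE
    rw [hH, add_mul, mul_assoc, map_add, coeff_X_pow_mul', if_pos (by omega),
      coeff_coe_trunc_mul _ _ (by omega), coeff_one, if_neg (by omega)] at h
    rw [← eq_neg_of_add_eq_zero_left h]
    congr 2
    omega
  have hLEG : coeff (m + n + 1) (L * (E * G)) = 0 := by
    rw [coeff_coe_trunc_mul _ _ (by omega)]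
    exact sum_eq_zero fun r hr => by
      rw [hEG _ (by simp at hr; omega), mul_zero]
  calc coeff (m + n + 1) G = coeff (m + n + 1) (H * (E * G)) := by
        rw [← mul_assoc, hHE, one_mul]
    _ = coeff n (U * E * G) := by
        rw [hH, add_mul, map_add, hLEG, add_zero, mul_assoc, coeff_X_pow_mul', if_pos (by omega),
          mul_assoc, show m + n + 1 - (m + 1) = n by omega]
    _ = _ := by
        rw [coeff_mul, ← Nat.sum_antidiagonal_swap]
        simp only [Prod.fst_swap, Prod.snd_swap]
        rw [Nat.sum_antidiagonal_eq_sum_range_succ (fun i j => coeff j (U * E) * coeff i G),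
          ← sum_neg_distrib]
        exact sum_congr rfl fun q hq => by rw [hUE q hq, neg_mul]

lemma PowerSeries.one_sub_C_mul_X_mul_mk_pow (a : A) :
    (1 - C a * X) * PowerSeries.mk (a ^ ·) = 1 := by
  ext (_ | k)
  · simp
  · rw [sub_mul, one_mul, mul_assoc, map_sub, coeff_C_mul, coeff_succ_X_mul]
    simp [pow_succ']

lemma oddElem_zero {N : ℕ} (x : Fin N → A) : oddElem x 0 = 1 := by
  simp [oddElem]

lemma oddElem_eq_zero_of_lt {N r : ℕ} (x : Fin N → A) (h : N < r) : oddElem x r = 0 := by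
  rw [oddElem, powersetCard_eq_empty.2 (by rwa [card_univ, Fintype.card_fin]), sum_empty]

lemma oddComplete_zero {N : ℕ} (x : Fin N → A) : oddComplete x 0 = 1 := by
  simp [oddComplete, Subsingleton.monotone]

lemma oddComplete_succ_of_fin_zero (x : Fin 0 → A) (r : ℕ) : oddComplete x (r + 1) = 0 := by
  simp [oddComplete, univ_eq_empty]

lemma oddElem_succ {n : ℕ} (x : Fin (n + 1) → A) (r : ℕ) :
    oddElem x (r + 1) =
      oddElem (x ∘ Fin.castSucc) (r + 1) + oddElem (x ∘ Fin.castSucc) r * x (Fin.last n) := by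
  set U := (univ : Finset (Fin n)).map Fin.castSuccEmb
  have hlast : Fin.last n ∉ U := by simp [U]
  have hU : ∀ s ∈ powersetCard r U, Fin.last n ∉ s := fun s hs h =>
    hlast ((mem_powersetCard.1 hs).1 h)
  rw [oddElem, Fin.univ_castSuccEmb, cons_eq_insert, powersetCard_succ_insert hlast,
    sum_union, sum_image, powersetCard_map, powersetCard_map, sum_map, sum_map,
    oddElem, oddElem, sum_mul]
  · congr 1
    · refine sum_congr rfl fun s _ => ?_
      simp [sort_map_castSuccEmb, List.map_map]
    · refine sum_congr rfl fun s _ => ?_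
      have : Fin.last n ∉ s.map Fin.castSuccEmb := by simp
      rw [RelEmbedding.coe_toEmbedding, mapEmbedding_apply, ← cons_eq_insert _ _ this,
        sort_cons_last, sort_map_castSuccEmb]
      simp [List.map_map]
  · exact fun s hs t ht hst => by
      rw [← erase_insert (hU s hs), hst, erase_insert (hU t ht)]
  · refine disjoint_left.2 fun s hs hs' => ?_
    obtain ⟨t, -, rfl⟩ := mem_image.1 hs'
    exact hlast ((mem_powersetCard.1 hs).1 (mem_insert_self _ _))

lemma Monotone.snoc_last {n r : ℕ} {g : Fin r → Fin (n + 1)} (hg : Monotone g) :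
    Monotone (Fin.snoc g (Fin.last n) : Fin (r + 1) → Fin (n + 1)) := by
  intro a b hab
  induction b using Fin.lastCases with
  | last => simp [Fin.le_last]
  | cast b =>
    induction a using Fin.lastCases with
    | last => exact absurd hab (Fin.castSucc_lt_last b).not_ge
    | cast a => simpa using hg (Fin.castSucc_le_castSucc_iff.1 hab)

lemma oddComplete_succ {n : ℕ} (x : Fin (n + 1) → A) (r : ℕ) :
    oddComplete x (r + 1) =
      x (Fin.last n) * oddComplete x r + oddComplete (x ∘ Fin.castSucc) (r + 1) := by
  rw [oddComplete, ← sum_filter_add_sum_filter_not _ (fun f => f (Fin.last r) = Fin.last n)]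
  congr 1
  · rw [oddComplete, mul_sum]
    refine sum_nbij' Fin.init (fun g => Fin.snoc g (Fin.last n)) ?_ ?_ ?_ ?_ ?_ <;>
      simp only [mem_filter, mem_univ, true_and]
    · exact fun f hf a b hab => hf.1 (Fin.castSucc_le_castSucc_iff.2 hab)
    · exact fun g hg => ⟨hg.snoc_last, Fin.snoc_last _ _⟩
    · exact fun f hf => by rw [← hf.2, Fin.snoc_init_self]
    · exact fun g _ => Fin.init_snoc _ _
    · intro f hf
      rw [List.ofFn_succ', List.concat_eq_append, List.reverse_append]
      simp [hf.2, Fin.init]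
  · have hne : ∀ f ∈ univ.filter (fun f : Fin (r + 1) → Fin (n + 1) => Monotone f) |>.filter
        (fun f => ¬f (Fin.last r) = Fin.last n), ∀ k, f k ≠ Fin.last n := by
      simp only [mem_filter, mem_univ, true_and]
      exact fun f hf k => ((hf.1 (Fin.le_last k)).trans_lt ((Fin.le_last _).lt_of_ne hf.2)).ne
    refine sum_bij' (fun f hf k => (f k).castPred (hne f hf k)) (fun g _ => Fin.castSucc ∘ g)
      ?_ ?_ ?_ ?_ ?_
    · simp only [mem_filter, mem_univ, true_and]
      exact fun f hf a b hab => Fin.castPred_le_castPred_iff.2 (hf.1 hab)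
    · simp only [mem_filter, mem_univ, true_and]
      exact fun g hg => ⟨Fin.strictMono_castSucc.monotone.comp hg, (Fin.castSucc_lt_last _).ne⟩
    · exact fun f _ => funext fun k => Fin.castSucc_castPred _ _
    · exact fun g _ => funext fun k => Fin.castPred_castSucc _
    · exact fun f _ => rfl

def oddElemSeries {N : ℕ} (x : Fin N → A) : A⟦X⟧ :=
  PowerSeries.mk fun r => (-1) ^ r * oddElem x r

def oddCompleteSeries {N : ℕ} (x : Fin N → A) : A⟦X⟧ :=
  PowerSeries.mk (oddComplete x)

lemma oddElemSeries_succ {n : ℕ} (x : Fin (n + 1) → A) :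
    oddElemSeries x = oddElemSeries (x ∘ Fin.castSucc) * (1 - C (x (Fin.last n)) * X) := by
  ext (_ | r)
  · simp [oddElemSeries, oddElem_zero]
  · rw [mul_sub, mul_one, ← mul_assoc, map_sub, coeff_succ_mul_X, coeff_mul_C]
    simp [oddElemSeries, oddElem_succ, pow_succ, mul_add, mul_assoc, sub_eq_add_neg]

lemma oddCompleteSeries_succ {n : ℕ} (x : Fin (n + 1) → A) :
    (1 - C (x (Fin.last n)) * X) * oddCompleteSeries x =
      oddCompleteSeries (x ∘ Fin.castSucc) := by
  ext (_ | r)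
  · simp [oddCompleteSeries, oddComplete_zero]
  · rw [sub_mul, one_mul, mul_assoc, map_sub, coeff_C_mul, coeff_succ_X_mul]
    simp [oddCompleteSeries, oddComplete_succ]

lemma oddElemSeries_mul_oddCompleteSeries {N : ℕ} (x : Fin N → A) :
    oddElemSeries x * oddCompleteSeries x = 1 := by
  induction N with
  | zero =>
    have hE : oddElemSeries x = 1 := by
      ext (_ | r)
      · simp [oddElemSeries, oddElem_zero]
      · simp [oddElemSeries, oddElem_eq_zero_of_lt x r.succ_pos]
    have hH : oddCompleteSeries x = 1 := by
      ext (_ | r)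
      · simp [oddCompleteSeries, oddComplete_zero]
      · simp [oddCompleteSeries, oddComplete_succ_of_fin_zero]
    rw [hE, hH, one_mul]
  | succ n ih =>
    rw [oddElemSeries_succ, mul_assoc, oddCompleteSeries_succ, ih]

lemma oddCompleteSeries_mul_oddElemSeries {N : ℕ} (x : Fin N → A) :
    oddCompleteSeries x * oddElemSeries x = 1 := by
  have hunit : constantCoeff (oddElemSeries x) = ((1 : Aˣ) : A) := by
    simp [oddElemSeries, oddElem_zero]
  have hinv := invOfUnit_mul _ _ hunit
  rwa [← left_inv_eq_right_inv hinv (oddElemSeries_mul_oddCompleteSeries x)]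

lemma coeff_oddElemSeries_mul_mk_pow_last_of_lt {n : ℕ} (x : Fin (n + 1) → A) {j : ℕ}
    (hj : n < j) :
    coeff j (oddElemSeries x * PowerSeries.mk (x (Fin.last n) ^ ·)) = 0 := by
  rw [oddElemSeries_succ, mul_assoc, one_sub_C_mul_X_mul_mk_pow, mul_one]
  simp [oddElemSeries, oddElem_eq_zero_of_lt _ hj]

end

theorem statement17_general {A : Type*} [Ring A] (n : ℕ) (x : Fin (n + 1) → A) (m : ℕ) :
    x (Fin.last n) ^ (m + n + 1) =
      -∑ q ∈ Finset.range (n + 1),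
        (∑ r ∈ Finset.range (m + 1),
            (-1 : A) ^ (m + n + 1 - q - r) *
              (oddComplete x r * oddElem x (m + n + 1 - q - r))) *
          x (Fin.last n) ^ q := by
  have h := coeff_eq_neg_sum_of_mul_eq_one (oddCompleteSeries_mul_oddElemSeries x)
    (fun _ => coeff_oddElemSeries_mul_mk_pow_last_of_lt x) m
  simp only [oddCompleteSeries, oddElemSeries, coeff_mk] at h
  simp only [h, ((Commute.neg_one_right _).pow_right _).left_comm]

/-- In the odd polynomial algebra `OPol_{n+1}` (formalized inside any algebra with
`n+1` anticommuting odd variables), for any `m ≥ 0`: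
`x_{n+1}^{m+n+1} = -∑_{q=0}^{n} (∑_{r=0}^{m} (-1)^{m+n+1-q-r} h_r e_{m+n+1-q-r}) x_{n+1}^q`. -/
theorem statement17 {A : Type*} [Ring A] (n : ℕ) (x : Fin (n + 1) → A)
    (hx : ∀ i j : Fin (n + 1), i < j → x j * x i = -(x i * x j)) (m : ℕ) :
    x (Fin.last n) ^ (m + n + 1) =
      -∑ q ∈ Finset.range (n + 1),
        (∑ r ∈ Finset.range (m + 1),
            (-1 : A) ^ (m + n + 1 - q - r) *
              (oddComplete x r * oddElem x (m + n + 1 - q - r))) *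
          x (Fin.last n) ^ q :=
  statement17_general n x m
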